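/- arXiv:1606.08077 — 5 statements merged into one kernel-verified Lean document; each statement's English description precedes it below -/
import Mathlib

section
/- Fix a preference ≽^sing on the single items in S with x_1 ≽^sing x_2 ≽^sing ⋯ ≽^sing x_m, and for each k ∈ {1,…,m} let I_k = {x_1,…,x_k}. If a subset T ⊆ S satisfies |I_k ∩ T| ≥ k/2 for all k ∈ {1,…,m}, then T is necessarily agreeable with respect to ≽^sing. -/
open Finset

/-- A preference on subsets: a complete (total, hence reflexive) and transitive relation. -/
def IsPref {m : ℕ} (R : Finset (Fin m) → Finset (Fin m) → Prop) : Prop :=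
  (∀ A B, R A B ∨ R B A) ∧ ∀ A B C, R A B → R B C → R A C

/-- A preference on single items: a complete and transitive relation. -/
def IsSingPref {m : ℕ} (Rs : Fin m → Fin m → Prop) : Prop :=
  (∀ x y, Rs x y ∨ Rs y x) ∧ ∀ x y z, Rs x y → Rs y z → Rs x z

/-- A preference is monotonic if `T ∪ {x} ≽ T` for every subset `T` and item `x`. -/
def MonotonicPref {m : ℕ} (R : Finset (Fin m) → Finset (Fin m) → Prop) : Prop :=
  ∀ (T : Finset (Fin m)) (x : Fin m), R (insert x T) T

/-- A preference on subsets is responsive w.r.t. a preference `Rs` on single items if it is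
monotonic and `(T \ {y}) ∪ {x} ≽ T` whenever `x ∉ T`, `y ∈ T` and `x ≽ˢ y`. -/
def Responsive {m : ℕ} (Rs : Fin m → Fin m → Prop)
    (R : Finset (Fin m) → Finset (Fin m) → Prop) : Prop :=
  MonotonicPref R ∧
    ∀ (T : Finset (Fin m)) (x y : Fin m),
      x ∉ T → y ∈ T → Rs x y → R (insert x (T.erase y)) T

/-- A preference on subsets is consistent with a preference on single items if its
restriction to singletons agrees with it. -/
def Consistent {m : ℕ} (Rs : Fin m → Fin m → Prop)
    (R : Finset (Fin m) → Finset (Fin m) → Prop) : Prop :=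
  ∀ x y : Fin m, R {x} {y} ↔ Rs x y

/-- `T` is necessarily agreeable w.r.t. `Rs` if `T ≽ Tᶜ` for every responsive preference
consistent with `Rs`. -/
def NecAgreeable {m : ℕ} (Rs : Fin m → Fin m → Prop) (T : Finset (Fin m)) : Prop :=
  ∀ R : Finset (Fin m) → Finset (Fin m) → Prop,
    IsPref R → Responsive Rs R → Consistent Rs R → R T Tᶜ

/-- `T` is possibly agreeable w.r.t. `Rs` if `T ≻ Tᶜ` for some responsive preference
consistent with `Rs`. -/
def PossAgreeable {m : ℕ} (Rs : Fin m → Fin m → Prop) (T : Finset (Fin m)) : Prop :=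
  ∃ R : Finset (Fin m) → Finset (Fin m) → Prop,
    IsPref R ∧ Responsive Rs R ∧ Consistent Rs R ∧ R T Tᶜ ∧ ¬ R Tᶜ T

/-! The counting condition says that for every item `a`, no more items of `Tᶜ` than of `T` are
ranked at or above `a`, so Hall's theorem gives an injection `f` of `Tᶜ` into `T` with
`f y ≽ˢ y`. Responsiveness lets us trade the items `y ∈ Tᶜ` one at a time for `f y`, whence
`f(Tᶜ) ≽ Tᶜ`, and monotonicity gives `T ≽ f(Tᶜ)`. -/

section Preference

variable {m : ℕ} {Rs : Fin m → Fin m → Prop} {R : Finset (Fin m) → Finset (Fin m) → Prop}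

lemma IsPref.refl (hR : IsPref R) (A : Finset (Fin m)) : R A A := (hR.1 A A).elim id id

lemma MonotonicPref.of_subset (hR : IsPref R) (hM : MonotonicPref R) {A C : Finset (Fin m)}
    (hCA : C ⊆ A) : R A C := by
  suffices ∀ D : Finset (Fin m), R (D ∪ C) C by
    simpa [sdiff_union_of_subset hCA] using this (A \ C)
  intro D
  induction D using Finset.induction_on with
  | empty => simpa using hR.refl C
  | insert a D _ ih => exact hR.2 _ _ _ (by simpa [insert_union] using hM (D ∪ C) a) ih

lemma Responsive.image_union (hR : IsPref R) (hResp : Responsive Rs R) {f : Fin m → Fin m}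
    {B C : Finset (Fin m)} (hBC : Disjoint B C) (hfB : Disjoint (B.image f) (B ∪ C))
    (hinj : Set.InjOn f B) (hbetter : ∀ y ∈ B, Rs (f y) y) :
    R (B.image f ∪ C) (B ∪ C) := by
  induction B using Finset.induction_on generalizing C with
  | empty => simpa using hR.refl C
  | insert y B hyB ih =>
    have hyC : y ∉ C := disjoint_left.mp hBC (mem_insert_self y B)
    have hfy : f y ∉ insert y B ∪ C := disjoint_left.mp hfB (mem_image_of_mem f (by simp))
    have hyfB : y ∉ B.image f :=
      fun h => disjoint_right.mp hfB (by simp) (image_subset_image (subset_insert y B) h)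
    have hfyB : f y ∉ B.image f := by
      intro h
      obtain ⟨z, hz, hzy⟩ := mem_image.mp h
      exact hyB (hinj (mem_insert_of_mem hz) (mem_insert_self y B) hzy ▸ hz)
    have hunion : B ∪ insert y C = insert y B ∪ C := by grind
    have hswap : R ((insert y B).image f ∪ C) (B.image f ∪ insert y C) := by
      have := hResp.2 (B.image f ∪ insert y C) (f y) y (by grind) (by simp)
        (hbetter y (mem_insert_self y B))
      convert this using 1
      grind
    have hrest : R (B.image f ∪ insert y C) (insert y B ∪ C) := by
      rw [← hunion]
      refine ih (by grind) ?_ (hinj.mono (by simp)) (fun z hz => hbetter z (by simp [hz]))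
      rw [hunion]
      exact hfB.mono_left (image_subset_image (subset_insert y B))
    exact hR.2 _ _ _ hswap hrest

end Preference

lemma exists_injOn_le_of_card_filter_le {α : Type*} [LinearOrder α] {A B : Finset α}
    (h : ∀ a ∈ B, #(B.filter (· ≤ a)) ≤ #(A.filter (· ≤ a))) :
    ∃ f : α → α, Set.InjOn f B ∧ ∀ y ∈ B, f y ∈ A ∧ f y ≤ y := by
  have hall : ∀ s : Finset B, #s ≤ #(s.biUnion fun y => A.filter (· ≤ y.1)) := by
    intro s
    obtain rfl | hs := s.eq_empty_or_nonempty
    · simp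
    obtain ⟨y₀, hy₀, hmax⟩ := s.exists_max_image Subtype.val hs
    calc #s ≤ #(B.filter (· ≤ y₀.1)) :=
          card_le_card_of_injOn Subtype.val (fun y hy => by simpa using hmax y hy)
            Subtype.val_injective.injOn
      _ ≤ #(A.filter (· ≤ y₀.1)) := h y₀ y₀.2
      _ ≤ _ := card_le_card (subset_biUnion_of_mem (fun y : B => A.filter (· ≤ y.1)) hy₀)
  obtain ⟨g, hg, hgA⟩ := (all_card_le_biUnion_card_iff_exists_injective _).mp hall
  refine ⟨fun y => if hy : y ∈ B then g ⟨y, hy⟩ else y,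
    fun a (ha : a ∈ B) b (hb : b ∈ B) hab => ?_, fun y hy => ?_⟩
  · simp only [dif_pos ha, dif_pos hb] at hab
    exact congrArg Subtype.val (hg hab)
  · simpa [dif_pos hy] using hgA ⟨y, hy⟩

lemma card_compl_filter_le_card_filter {m : ℕ} {T : Finset (Fin m)}
    (h : ∀ k : ℕ, 1 ≤ k → k ≤ m → k ≤ 2 * (T.filter (fun x => x.val < k)).card)
    (a : Fin m) : #(Tᶜ.filter (· ≤ a)) ≤ #(T.filter (· ≤ a)) := by
  have hsplit : #(T.filter (· ≤ a)) + #(Tᶜ.filter (· ≤ a)) = a + 1 := by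
    rw [← Fin.card_Iic a, ← card_filter_add_card_filter_not (s := Iic a) (· ∈ T)]
    congr 2 <;> ext <;> simp [and_comm]
  have hk := h (a + 1) (by omega) a.isLt
  rw [filter_congr (q := (· ≤ a)) fun x _ => by rw [Fin.le_def, Nat.lt_succ_iff]] at hk
  omega

/-- Item `x_k` of the paper is `(k - 1 : Fin m)`, so `I_k` consists of the indices `< k`. -/
theorem stmt_2_general {m : ℕ} (Rs : Fin m → Fin m → Prop)
    (hord : ∀ i j : Fin m, i ≤ j → Rs i j)
    (T : Finset (Fin m))
    (h : ∀ k : ℕ, 1 ≤ k → k ≤ m → k ≤ 2 * (T.filter (fun x => x.val < k)).card) :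
    NecAgreeable Rs T := by
  obtain ⟨f, hinj, hf⟩ :=
    exists_injOn_le_of_card_filter_le fun a _ => card_compl_filter_le_card_filter h a
  have himage : Tᶜ.image f ⊆ T := image_subset_iff.mpr fun y hy => (hf y hy).1
  intro R hR hResp _
  have hswap : R (Tᶜ.image f) Tᶜ := by
    simpa using hResp.image_union hR (C := ∅) (disjoint_empty_right _)
      (by simpa using disjoint_compl_right.mono_left himage) hinj fun y hy => hord _ _ (hf y hy).2
  exact hR.2 _ _ _ (MonotonicPref.of_subset hR hResp.1 himage) hswap

/-- If `x_1 ≽ˢ x_2 ≽ˢ ⋯ ≽ˢ x_m` (item `x_k` corresponds to `(k-1 : Fin m)`) and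
`|I_k ∩ T| ≥ k/2` for all `k ∈ {1,…,m}` (where `I_k = {x_1,…,x_k}` consists of the items
of index `< k`), then `T` is necessarily agreeable w.r.t. `Rs`. -/
theorem stmt_2 {m : ℕ} (Rs : Fin m → Fin m → Prop) (hRs : IsSingPref Rs)
    (hord : ∀ i j : Fin m, i ≤ j → Rs i j)
    (T : Finset (Fin m))
    (h : ∀ k : ℕ, 1 ≤ k → k ≤ m → k ≤ 2 * (T.filter (fun x => x.val < k)).card) :
    NecAgreeable Rs T :=
  stmt_2_general Rs hord T h
end

section
/- Fix a strict preference ≽^sing on the single items in S with x_1 ≻^sing x_2 ≻^sing ⋯ ≻^sing x_m, and for each k ∈ {1,…,m} let I_k = {x_1,…,x_k}. If a subset T ⊆ S is necessarily agreeable with respect to ≽^sing, then |I_k ∩ T| ≥ k/2 for all k ∈ {1,…,m}. -/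
open Finset

/-!
Give each item a utility that is strictly decreasing (so the additive preference it induces is
responsive and consistent with the item order) and carries a huge bonus on the first `k` items.
Comparing `T` with its complement under that preference amounts to comparing how many of the
first `k` items each side holds, so if `T` held fewer than half of them it would lose.
-/

section AdditivePref

variable {m : ℕ}

def additivePref (u : Fin m → ℕ) (A B : Finset (Fin m)) : Prop :=
  ∑ x ∈ B, u x ≤ ∑ x ∈ A, u x

lemma isPref_additivePref (u : Fin m → ℕ) : IsPref (additivePref u) :=
  ⟨fun _ _ => le_total _ _, fun _ _ _ hAB hBC => hBC.trans hAB⟩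

lemma responsive_additivePref {Rs : Fin m → Fin m → Prop} {u : Fin m → ℕ}
    (h : ∀ x y, Rs x y → u y ≤ u x) : Responsive Rs (additivePref u) := by
  refine ⟨fun T x => sum_le_sum_of_subset (subset_insert x T), fun T x y hx hy hxy => ?_⟩
  have hx' : x ∉ T.erase y := fun hxT => hx (mem_of_mem_erase hxT)
  rw [additivePref, sum_insert hx', ← add_sum_erase T u hy]
  exact Nat.add_le_add_right (h x y hxy) _

lemma consistent_additivePref {Rs : Fin m → Fin m → Prop} {u : Fin m → ℕ}
    (h : ∀ x y, Rs x y ↔ u y ≤ u x) : Consistent Rs (additivePref u) := by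
  intro x y
  simp only [additivePref, sum_singleton, h]

lemma NecAgreeable.sum_compl_le {Rs : Fin m → Fin m → Prop} {T : Finset (Fin m)}
    (hT : NecAgreeable Rs T) {u : Fin m → ℕ} (h : ∀ x y, Rs x y ↔ u y ≤ u x) :
    ∑ x ∈ Tᶜ, u x ≤ ∑ x ∈ T, u x :=
  hT _ (isPref_additivePref u) (responsive_additivePref fun x y => (h x y).1)
    (consistent_additivePref h)

end AdditivePref

lemma card_filter_add_card_compl_filter {α : Type*} [Fintype α] [DecidableEq α]
    (T : Finset α) (p : α → Prop) [DecidablePred p] :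
    #(T.filter p) + #(Tᶜ.filter p) = #(univ.filter p) := by
  rw [← card_union_of_disjoint (disjoint_filter_filter disjoint_compl_right), ← filter_union,
    union_compl]

section GapUtility

variable {m k : ℕ}

/-- The bonus `m * m + 1` exceeds the sum of the tie-breaking parts `m - x` over any subset. -/
def gapUtility (m k : ℕ) (x : Fin m) : ℕ :=
  (if x.val < k then m * m + 1 else 0) + (m - x.val)

lemma gapUtility_strictAnti : StrictAnti (gapUtility m k) := by
  intro a b hab
  have hab' : a.val < b.val := hab
  have hb := b.isLt
  unfold gapUtility
  split_ifs <;> omega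

lemma mul_card_filter_le_sum_gapUtility (T : Finset (Fin m)) :
    (m * m + 1) * #(T.filter fun x => x.val < k) ≤ ∑ x ∈ T, gapUtility m k x :=
  calc (m * m + 1) * #(T.filter fun x => x.val < k)
      = ∑ _x ∈ T.filter fun x => x.val < k, (m * m + 1) := by
        rw [sum_const, smul_eq_mul, mul_comm]
    _ ≤ ∑ x ∈ T.filter fun x => x.val < k, gapUtility m k x :=
        sum_le_sum fun x hx => by simp [gapUtility, (mem_filter.1 hx).2]
    _ ≤ ∑ x ∈ T, gapUtility m k x := sum_le_sum_of_subset (filter_subset _ _)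

lemma sum_gapUtility_lt (T : Finset (Fin m)) :
    ∑ x ∈ T, gapUtility m k x < (m * m + 1) * (#(T.filter fun x => x.val < k) + 1) := by
  have hbonus : ∑ x ∈ T, (if x.val < k then m * m + 1 else 0)
      = (m * m + 1) * #(T.filter fun x => x.val < k) := by
    rw [← sum_filter, sum_const, smul_eq_mul, mul_comm]
  have htie : ∑ x ∈ T, (m - x.val) ≤ m * m :=
    calc ∑ x ∈ T, (m - x.val) ≤ ∑ _x ∈ T, m := sum_le_sum fun x _ => Nat.sub_le m x.val
      _ = #T * m := by rw [sum_const, smul_eq_mul]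
      _ ≤ m * m := Nat.mul_le_mul_right m (card_le_univ T |>.trans (Fintype.card_fin m).le)
  simp only [gapUtility, sum_add_distrib, hbonus, mul_add_one]
  omega

end GapUtility

theorem stmt_3_general {m : ℕ} (Rs : Fin m → Fin m → Prop)
    (hord : ∀ i j : Fin m, i ≤ j → Rs i j)
    (hstrict : ∀ i j : Fin m, i < j → ¬ Rs j i)
    (T : Finset (Fin m)) (hT : NecAgreeable Rs T) :
    ∀ k : ℕ, 1 ≤ k → k ≤ m → k ≤ 2 * (T.filter (fun x => x.val < k)).card := by
  intro k _ hkm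
  have hRs : ∀ x y, Rs x y ↔ gapUtility m k y ≤ gapUtility m k x := fun x y => by
    rw [gapUtility_strictAnti.le_iff_ge]
    exact ⟨fun h => not_lt.1 fun hyx => hstrict y x hyx h, hord x y⟩
  have hcount := card_filter_add_card_compl_filter T (fun x : Fin m => x.val < k)
  rw [Fin.card_filter_val_lt, min_eq_right hkm] at hcount
  have hlt : #(Tᶜ.filter fun x => x.val < k) < #(T.filter fun x => x.val < k) + 1 :=
    Nat.lt_of_mul_lt_mul_left <| (mul_card_filter_le_sum_gapUtility Tᶜ).trans_lt <|
      (hT.sum_compl_le hRs).trans_lt (sum_gapUtility_lt T)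
  omega

/-- If `x_1 ≻ˢ x_2 ≻ˢ ⋯ ≻ˢ x_m` (a strict ordering) and `T` is necessarily agreeable
w.r.t. `Rs`, then `|I_k ∩ T| ≥ k/2` for all `k ∈ {1,…,m}`. -/
theorem stmt_3 {m : ℕ} (Rs : Fin m → Fin m → Prop) (hRs : IsSingPref Rs)
    (hord : ∀ i j : Fin m, i ≤ j → Rs i j)
    (hstrict : ∀ i j : Fin m, i < j → ¬ Rs j i)
    (T : Finset (Fin m)) (hT : NecAgreeable Rs T) :
    ∀ k : ℕ, 1 ≤ k → k ≤ m → k ≤ 2 * (T.filter (fun x => x.val < k)).card :=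
  stmt_3_general Rs hord hstrict T hT
end

section
/- For every m ≥ 1 there exist two monotonic preferences ≽_1 and ≽_2 on the subsets of a set S of m items such that every subset T ⊆ S that is agreeable to both players (i.e., T ≽_1 S∖T and T ≽_2 S∖T) satisfies |T| ≥ ⌈(m+1)/2⌉. -/
open Finset

/-! Both players rank bundles by size and differ only in how they break ties: player 1 prefers
the bundle containing a fixed item `a`, player 2 the one without it. A bundle `T` of exactly half
the items ties with its complement in size, so it can win the tie-break for at most one player;
hence a bundle agreeable to both is strictly larger than its complement. -/

section
variable {m : ℕ}

def prefOfKey {α : Type*} [LinearOrder α] (key : Finset (Fin m) → α) :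
    Finset (Fin m) → Finset (Fin m) → Prop :=
  fun A B => key B ≤ key A

theorem isPref_prefOfKey {α : Type*} [LinearOrder α] (key : Finset (Fin m) → α) :
    IsPref (prefOfKey key) :=
  ⟨fun _ _ => le_total _ _, fun _ _ _ hAB hBC => hBC.trans hAB⟩

theorem monotonicPref_prefOfKey {α : Type*} [LinearOrder α] {key : Finset (Fin m) → α}
    (hkey : ∀ T x, key T ≤ key (insert x T)) : MonotonicPref (prefOfKey key) :=
  hkey

def cardLexKey (p : Finset (Fin m) → Bool) (A : Finset (Fin m)) : ℕ ×ₗ Bool :=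
  toLex (A.card, p A)

theorem cardLexKey_le_insert (p : Finset (Fin m) → Bool) (T : Finset (Fin m)) (x : Fin m) :
    cardLexKey p T ≤ cardLexKey p (insert x T) := by
  by_cases hx : x ∈ T
  · rw [insert_eq_of_mem hx]
  · refine (Prod.Lex.toLex_le_toLex).2 (Or.inl ?_)
    rw [card_insert_of_notMem hx]
    exact Nat.lt_succ_self _

theorem card_compl_lt_of_cardLexKey_le {p : Finset (Fin m) → Bool} {T : Finset (Fin m)}
    (hp : p Tᶜ = !p T) (h : cardLexKey p Tᶜ ≤ cardLexKey p T)
    (h' : cardLexKey (fun A => !p A) Tᶜ ≤ cardLexKey (fun A => !p A) T) :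
    Tᶜ.card < T.card := by
  simp only [cardLexKey, Prod.Lex.toLex_le_toLex, hp, Bool.not_not] at h h'
  rcases h with h | ⟨-, h⟩
  · exact h
  rcases h' with h' | ⟨-, h'⟩
  · exact h'
  exact absurd (le_antisymm h' h) (by cases p T <;> decide)

end

/-- Tightness for two players: for every `m ≥ 1` there are monotonic preferences such that
every subset agreeable to both players has size at least `⌈(m+1)/2⌉ = (m+2)/2`. -/
theorem stmt_7 (m : ℕ) (hm : 1 ≤ m) :
    ∃ R1 R2 : Finset (Fin m) → Finset (Fin m) → Prop,
      IsPref R1 ∧ IsPref R2 ∧ MonotonicPref R1 ∧ MonotonicPref R2 ∧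
      ∀ T : Finset (Fin m), R1 T Tᶜ → R2 T Tᶜ → (m + 2) / 2 ≤ T.card := by
  let a : Fin m := ⟨0, hm⟩
  let p : Finset (Fin m) → Bool := fun A => decide (a ∈ A)
  refine ⟨prefOfKey (cardLexKey p), prefOfKey (cardLexKey fun A => !p A),
    isPref_prefOfKey _, isPref_prefOfKey _,
    monotonicPref_prefOfKey (cardLexKey_le_insert _),
    monotonicPref_prefOfKey (cardLexKey_le_insert _), fun T h1 h2 => ?_⟩
  have hp : p Tᶜ = !p T := by simp [p]
  have hlt := card_compl_lt_of_cardLexKey_le hp h1 h2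
  rw [card_compl, Fintype.card_fin] at hlt
  omega
end

section
/- For every m ≥ 1 there exist preferences ≽^sing_1 and ≽^sing_2 on the single items of a set S of m items such that every subset T ⊆ S that is necessarily agreeable with respect to both ≽^sing_1 and ≽^sing_2 satisfies |T| ≥ ⌈(m+1)/2⌉. In particular, for odd m = 2k+1 one may take ≽^sing_1 strict; for even m = 2k one may take x_1 ≻^sing_1 x_2 ≻^sing_1 ⋯ ≻^sing_1 x_{2k} and x_{2k} ≻^sing_2 x_{2k−1} ≻^sing_2 ⋯ ≻^sing_2 x_1. -/
open Finset

/-!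
A necessarily agreeable `T` must outweigh its complement under every additive preference whose
item weights are ordered like the items. Weighting an upper set `U` of items far above all other
items then forces `T` to contain at least half of `U`. If `T` misses an item `c`, it therefore
holds half of the upper set `Iic c` of the order `x₁ ≻ ⋯ ≻ xₘ` and half of the upper set `Ici c`
of the reversed order; these cover all `m` items and share only `c`, so `m + 1 ≤ 2 * #T`.
-/

namespace IsSingPref

variable {m : ℕ} {Rs : Fin m → Fin m → Prop}

theorem refl (hRs : IsSingPref Rs) (x : Fin m) : Rs x x :=
  (hRs.1 x x).elim id id

theorem exists_utility (hRs : IsSingPref Rs) :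
    ∃ u : Fin m → ℕ, (∀ x y, Rs x y ↔ u y ≤ u x) ∧ ∀ x, u x ≤ m := by
  classical
  refine ⟨fun x => #(univ.filter (Rs x)), fun x y => ⟨fun hxy => ?_, fun hle => ?_⟩, fun x => ?_⟩
  · exact card_le_card fun z hz => by
      simp only [mem_filter, mem_univ, true_and] at hz ⊢
      exact hRs.2 x y z hxy hz
  · by_contra hxy
    have hyx : Rs y x := (hRs.1 x y).resolve_left hxy
    have hsub : univ.filter (Rs x) ⊂ univ.filter (Rs y) := by
      refine ssubset_iff_of_subset (fun z hz => ?_) |>.2 ⟨y, ?_, ?_⟩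
      · simp only [mem_filter, mem_univ, true_and] at hz ⊢
        exact hRs.2 y x z hyx hz
      · simpa using hRs.refl y
      · simpa using hxy
    exact (card_lt_card hsub).not_ge hle
  · simpa using card_le_univ (filter (Rs x) univ)

end IsSingPref

namespace NecAgreeable

variable {m : ℕ} {Rs : Fin m → Fin m → Prop} {T : Finset (Fin m)}

theorem sum_compl_le_s9 (hT : NecAgreeable Rs T) {u : Fin m → ℕ}
    (hu : ∀ x y, Rs x y ↔ u y ≤ u x) : ∑ x ∈ Tᶜ, u x ≤ ∑ x ∈ T, u x := by
  refine hT (fun A B => ∑ x ∈ B, u x ≤ ∑ x ∈ A, u x)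
    ⟨fun A B => le_total _ _, fun A B C hAB hBC => hBC.trans hAB⟩ ⟨fun A x => ?_, ?_⟩ ?_
  · exact sum_le_sum_of_subset (subset_insert x A)
  · intro A x y hx hy hxy
    rw [sum_insert fun h => hx (mem_of_mem_erase h), ← add_sum_erase A u hy]
    exact Nat.add_le_add_right ((hu x y).1 hxy) _
  · intro x y
    simpa only [sum_singleton] using (hu x y).symm

theorem card_le_two_mul_card_inter (hRs : IsSingPref Rs) (hT : NecAgreeable Rs T)
    {U : Finset (Fin m)} (hU : ∀ x y, x ∈ U → Rs y x → y ∈ U) : #U ≤ 2 * #(U ∩ T) := by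
  obtain ⟨u, hu, hum⟩ := hRs.exists_utility
  set M := m * m + 1
  have hmM : m < M := Nat.lt_succ_of_le (Nat.le_mul_self m)
  set w : Fin m → ℕ := fun x => (if x ∈ U then M else 0) + u x
  have hw : ∀ x y, Rs x y ↔ w y ≤ w x := by
    intro x y
    have hxm := hum x
    have hym := hum y
    by_cases hx : x ∈ U <;> by_cases hy : y ∈ U
    · simpa [w, hx, hy] using hu x y
    · have hxy : Rs x y := (hRs.1 x y).resolve_right fun hyx => hy (hU x y hx hyx)
      simp only [w, hx, hy, if_true, if_false]
      exact iff_of_true hxy (by omega)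
    · simp only [w, hx, hy, if_true, if_false]
      exact iff_of_false (fun hxy => hx (hU y x hy hxy)) (by omega)
    · simpa [w, hx, hy] using hu x y
  have hsum_w : ∀ A : Finset (Fin m), ∑ x ∈ A, w x = #(A ∩ U) * M + ∑ x ∈ A, u x := by
    intro A
    rw [sum_add_distrib, sum_ite_mem, sum_const, smul_eq_mul]
  have hsum_u : ∑ x ∈ T, u x < M :=
    calc ∑ x ∈ T, u x ≤ #T * m := by simpa using sum_le_sum fun x (_ : x ∈ T) => hum x
      _ ≤ m * m := Nat.mul_le_mul_right m (by simpa using card_le_univ T)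
      _ < M := Nat.lt_succ_self _
  have hcompl : #(Tᶜ ∩ U) < #(T ∩ U) + 1 := by
    refine Nat.lt_of_mul_lt_mul_right (a := M) ?_
    calc #(Tᶜ ∩ U) * M ≤ #(Tᶜ ∩ U) * M + ∑ x ∈ Tᶜ, u x := Nat.le_add_right _ _
      _ ≤ #(T ∩ U) * M + ∑ x ∈ T, u x := by simpa only [hsum_w] using hT.sum_compl_le_s9 hw
      _ < (#(T ∩ U) + 1) * M := by rw [add_one_mul]; omega
  have hsplit := card_inter_add_card_sdiff U T
  rw [sdiff_eq_inter_compl, inter_comm U Tᶜ] at hsplit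
  rw [inter_comm U T] at hsplit ⊢
  omega

end NecAgreeable

theorem Finset.card_Iic_inter_add_card_Ici_inter_le {α : Type*} [PartialOrder α] [DecidableEq α]
    [LocallyFiniteOrderBot α] [LocallyFiniteOrderTop α] {T : Finset α} {c : α} (hc : c ∉ T) :
    #(Iic c ∩ T) + #(Ici c ∩ T) ≤ #T := by
  rw [← card_union_of_disjoint]
  · exact card_le_card (union_subset inter_subset_right inter_subset_right)
  · refine disjoint_left.2 fun x hx hx' => hc ?_
    simp only [mem_inter, mem_Iic, mem_Ici] at hx hx'
    exact le_antisymm hx.1 hx'.1 ▸ hx.2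

/-- Tightness: for every `m ≥ 1` there are preferences on single items such that every
subset necessarily agreeable w.r.t. both has size at least `⌈(m+1)/2⌉ = (m+2)/2`. -/
theorem stmt_9 (m : ℕ) (hm : 1 ≤ m) :
    ∃ Rs1 Rs2 : Fin m → Fin m → Prop,
      IsSingPref Rs1 ∧ IsSingPref Rs2 ∧
      ∀ T : Finset (Fin m),
        NecAgreeable Rs1 T → NecAgreeable Rs2 T → (m + 2) / 2 ≤ T.card := by
  have hle : IsSingPref (fun x y : Fin m => x ≤ y) := ⟨le_total, fun _ _ _ => le_trans⟩
  have hge : IsSingPref (fun x y : Fin m => y ≤ x) :=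
    ⟨fun x y => le_total y x, fun _ _ _ h₁ h₂ => h₂.trans h₁⟩
  refine ⟨_, _, hle, hge, fun T h₁ h₂ => ?_⟩
  by_cases hT : T = univ
  · subst hT
    simp only [card_univ, Fintype.card_fin]
    omega
  obtain ⟨c, hc⟩ : ∃ c, c ∉ T := by simpa [eq_univ_iff_forall] using hT
  have hIic := h₁.card_le_two_mul_card_inter hle (U := Iic c) fun x y hx hyx =>
    mem_Iic.2 (hyx.trans (mem_Iic.1 hx))
  have hIci := h₂.card_le_two_mul_card_inter hge (U := Ici c) fun x y hx hxy =>
    mem_Ici.2 ((mem_Ici.1 hx).trans hxy)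
  have hdisj := card_Iic_inter_add_card_Ici_inter_le hc
  rw [Fin.card_Iic] at hIic
  rw [Fin.card_Ici] at hIci
  omega
end

section
/- For every m ≥ 1 and n ≥ 1 there exist n monotonic preferences ≽_1,…,≽_n on the subsets of a set S of m items such that every subset T ⊆ S that is agreeable to all n players (i.e., T ≽_i S∖T for every i) satisfies |T| ≥ min(⌈(m+n−1)/2⌉, m). -/
open Finset

/-!
Take additive preferences. With `ℓ = min (n - 1) m`, player `i < ℓ` gives every item weight `1`
except item `i`, which weighs `ℓ + 1`; every other player values only the items `≥ ℓ`, one each.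
If a commonly agreeable `T` misses an item `i < ℓ`, player `i` forces `2 * #T ≥ m + ℓ`. Otherwise
`T` holds all `ℓ` low items and, to satisfy the last player, half of the remaining `m - ℓ`, so
again `2 * #T ≥ m + ℓ`.
-/

section

variable {m : ℕ}

def AdditivePref (w : Fin m → ℕ) (A B : Finset (Fin m)) : Prop :=
  ∑ x ∈ B, w x ≤ ∑ x ∈ A, w x

lemma isPref_additivePref_s12 (w : Fin m → ℕ) : IsPref (AdditivePref w) :=
  ⟨fun _ _ => le_total _ _, fun _ _ _ hAB hBC => hBC.trans hAB⟩

lemma monotonicPref_additivePref (w : Fin m → ℕ) : MonotonicPref (AdditivePref w) :=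
  fun T x => sum_le_sum_of_subset (subset_insert x T)

lemma additivePref_compl_iff (w : Fin m → ℕ) (T : Finset (Fin m)) :
    AdditivePref w T Tᶜ ↔ ∑ x, w x ≤ 2 * ∑ x ∈ T, w x := by
  rw [AdditivePref, ← sum_add_sum_compl T w]
  omega

lemma add_le_two_mul_card_of_additivePref_single {i : Fin m} {c : ℕ} {T : Finset (Fin m)}
    (hT : AdditivePref (1 + Pi.single i c) T Tᶜ) (hi : i ∉ T) : m + c ≤ 2 * #T := by
  simpa [additivePref_compl_iff, sum_add_distrib, sum_pi_single', hi] using hT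

lemma add_le_two_mul_card_of_additivePref_compl {L T : Finset (Fin m)}
    (hT : AdditivePref (fun x => if x ∉ L then 1 else 0) T Tᶜ) (hLT : L ⊆ T) :
    m + #L ≤ 2 * #T := by
  rw [additivePref_compl_iff, sum_boole, sum_boole, filter_notMem_eq_sdiff,
    filter_notMem_eq_sdiff, card_sdiff_of_subset hLT, ← compl_eq_univ_sdiff, card_compl] at hT
  have hLT' := card_le_card hLT
  have hTm := card_le_univ T
  simp only [Fintype.card_fin, Nat.cast_id] at hT hTm
  omega

theorem exists_monotonicPref_add_le_two_mul_card {ℓ n : ℕ} (hℓm : ℓ ≤ m) (hℓn : ℓ < n) :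
    ∃ R : Fin n → Finset (Fin m) → Finset (Fin m) → Prop,
      (∀ i, IsPref (R i)) ∧ (∀ i, MonotonicPref (R i)) ∧
      ∀ T : Finset (Fin m), (∀ i, R i T Tᶜ) → m + ℓ ≤ 2 * #T := by
  set L : Finset (Fin m) := {x | x < ℓ}
  have hL : #L = ℓ := by rw [Fin.card_filter_val_lt, min_eq_right hℓm]
  let w (i : Fin n) : Fin m → ℕ :=
    if h : i < ℓ then 1 + Pi.single ⟨i, h.trans_le hℓm⟩ ℓ else fun x => if x ∉ L then 1 else 0
  refine ⟨fun i => AdditivePref (w i), fun i => isPref_additivePref_s12 _,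
    fun i => monotonicPref_additivePref _, fun T hT => ?_⟩
  by_cases hLT : L ⊆ T
  · have hlast := hT ⟨ℓ, hℓn⟩
    simp only [w, lt_irrefl, dite_false] at hlast
    simpa [hL] using add_le_two_mul_card_of_additivePref_compl hlast hLT
  · obtain ⟨x, hxL, hxT⟩ := not_subset.mp hLT
    have hx : (x : ℕ) < ℓ := by simpa [L] using hxL
    have hplayer := hT ⟨x, hx.trans hℓn⟩
    simp only [w, hx, dite_true] at hplayer
    exact add_le_two_mul_card_of_additivePref_single hplayer hxT

end

/-- Here `⌈(m+n−1)/2⌉` is written `(m + n) / 2`. -/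
theorem stmt_12_general (m n : ℕ) (hn : 1 ≤ n) :
    ∃ R : Fin n → Finset (Fin m) → Finset (Fin m) → Prop,
      (∀ i, IsPref (R i)) ∧ (∀ i, MonotonicPref (R i)) ∧
      ∀ T : Finset (Fin m), (∀ i, R i T Tᶜ) → min ((m + n) / 2) m ≤ T.card := by
  obtain ⟨R, hpref, hmono, hagree⟩ :=
    exists_monotonicPref_add_le_two_mul_card (m := m) (ℓ := min (n - 1) m) (n := n)
      (min_le_right _ _) (by omega)
  exact ⟨R, hpref, hmono, fun T hT => by have := hagree T hT; omega⟩

/-- Tightness for `n` players: there exist monotonic preferences such that every subset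
agreeable to all players has size at least `min(⌈(m+n−1)/2⌉, m) = min((m+n)/2, m)`. -/
theorem stmt_12 (m n : ℕ) (hm : 1 ≤ m) (hn : 1 ≤ n) :
    ∃ R : Fin n → Finset (Fin m) → Finset (Fin m) → Prop,
      (∀ i, IsPref (R i)) ∧ (∀ i, MonotonicPref (R i)) ∧
      ∀ T : Finset (Fin m), (∀ i, R i T Tᶜ) → min ((m + n) / 2) m ≤ T.card :=
  stmt_12_general m n hn
end
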